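/- There exists a universal constant c > 0 with the following property. Let f : ℝ^N → ℝ^n be continuously differentiable with Jacobian J : ℝ^N → ℝ^{n×N}, let y ∈ ℝ^n satisfy ‖y‖ ≤ √n, and let Φ ∈ ℝ^{n×M} with K := ΦΦ^T. Define the gradient-descent iterations θ(t+1) = θ(t) − (η/n) J(θ(t))^T (f(θ(t)) − y) and ω(t+1) = ω(t) − (η/n) Φ^T (Φ ω(t) − y), and set u(t) := f(θ(t)) and u^lin(t) := Φ ω(t). Assume u(0) = u^lin(0) = 0, η ≤ n/‖K‖, and that there exist ε ∈ (0, ‖K‖) and R > 0 with R² ε < n such that ‖J(θ) J(θ')^T − K‖ ≤ ε whenever ‖θ − θ(0)‖ ≤ R and ‖θ' − θ(0)‖ ≤ R. Then there is a universal constant C > 0 such that for every integer t with 0 ≤ t ≤ c R²/η: ‖u(t) − u^lin(t)‖ ≤ C η t ε/√n, ‖θ(t) − θ(0)‖ ≤ R, and ‖ω(t) − ω(0)‖ ≤ R. -/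

import Mathlib

open MeasureTheory ProbabilityTheory

noncomputable section

namespace EarlyPhase

/-- The squared ℓ₂ norm of a vector. -/
def sqnorm {ι : Type*} [Fintype ι] (x : ι → ℝ) : ℝ := ∑ i, (x i) ^ 2

/-- The ℓ₂ norm of a vector. -/
def vnorm {ι : Type*} [Fintype ι] (x : ι → ℝ) : ℝ := Real.sqrt (∑ i, (x i) ^ 2)

/-- The Euclidean inner product of two vectors. -/
def vdot {ι : Type*} [Fintype ι] (x y : ι → ℝ) : ℝ := ∑ i, x i * y i

/-- The spectral norm (ℓ₂ → ℓ₂ operator norm) of a matrix. -/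
def spNorm {ι κ : Type*} [Fintype ι] [Fintype κ] (A : Matrix ι κ ℝ) : ℝ :=
  sSup {c : ℝ | ∃ x : κ → ℝ, vnorm x ≤ 1 ∧ c = vnorm (A.mulVec x)}

/-- The Frobenius norm of a matrix. -/
def frobNorm {ι κ : Type*} [Fintype ι] [Fintype κ] (A : Matrix ι κ ℝ) : ℝ :=
  Real.sqrt (∑ i, ∑ j, (A i j) ^ 2)

/-- The standard Gaussian measure N(0, I) on `ι → ℝ`. -/
def stdGaussian (ι : Type*) [Fintype ι] : Measure (ι → ℝ) :=
  Measure.pi fun _ => gaussianReal 0 1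

/-- Iterates of a map. -/
def iterSeq {A : Type*} (step : A → A) (a0 : A) : ℕ → A
  | 0 => a0
  | t + 1 => step (iterSeq step a0 t)

/-- Activation assumption: either φ is twice continuously differentiable with `|φ(0)|`,
`|φ'|`, `|φ''|` bounded by `Ca` (and `φd = φ'`), or φ is piecewise linear with slopes `1, a`
(and `φd z = 1` for `z ≥ 0`, `φd z = a` for `z < 0`). -/
def ActAssump (Ca : ℝ) (φ φd : ℝ → ℝ) : Prop :=
  (ContDiff ℝ 2 φ ∧ φd = deriv φ ∧ |φ 0| ≤ Ca ∧ (∀ z, |φd z| ≤ Ca) ∧ ∀ z, |deriv φd z| ≤ Ca)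
  ∨ ∃ a : ℝ, (∀ z, φ z = if 0 ≤ z then z else a * z) ∧ ∀ z, φd z = if 0 ≤ z then 1 else a

/-- ζ = E[φ'(g)] for g ~ N(0,1). -/
def zetaOf (φd : ℝ → ℝ) : ℝ := ∫ z, φd z ∂(gaussianReal 0 1)

/-- ν² = (E[g φ'(g)])² · Tr[Σ²]/d. -/
def nuSqOf {d : ℕ} (φd : ℝ → ℝ) (Sig : Matrix (Fin d) (Fin d) ℝ) : ℝ :=
  (∫ z, z * φd z ∂(gaussianReal 0 1)) ^ 2 * (Sig * Sig).trace / d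

/-- The function e ↦ E[φ((1+e) g)] for g ~ N(0,1). -/
def thFun (φ : ℝ → ℝ) : ℝ → ℝ := fun e => ∫ z, φ ((1 + e) * z) ∂(gaussianReal 0 1)

/-- ϑ₀: the constant coefficient of the second-order Taylor polynomial of `thFun φ` at 0. -/
def th0 (φ : ℝ → ℝ) : ℝ := thFun φ 0

/-- ϑ₁: the linear coefficient of the second-order Taylor polynomial of `thFun φ` at 0. -/
def th1 (φ : ℝ → ℝ) : ℝ := deriv (thFun φ) 0

/-- ϑ₂: the quadratic coefficient of the second-order Taylor polynomial of `thFun φ` at 0. -/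
def th2 (φ : ℝ → ℝ) : ℝ := deriv (deriv (thFun φ)) 0 / 2

/-- q(x) = ϑ₀ + ϑ₁(‖x‖/√d − 1) + ϑ₂(‖x‖/√d − 1)². -/
def qEnt {d : ℕ} (φ : ℝ → ℝ) (x : Fin d → ℝ) : ℝ :=
  th0 φ + th1 φ * (vnorm x / Real.sqrt d - 1) + th2 φ * (vnorm x / Real.sqrt d - 1) ^ 2

/-- Entry marginal assumptions: mean zero, variance one, subgaussian with constant `Ca`. -/
def Marginals (Ca : ℝ) {d : ℕ} (ν : Fin d → Measure ℝ) : Prop :=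
  (∀ j, ∫ z, z ∂(ν j) = 0) ∧ (∀ j, ∫ z, z ^ 2 ∂(ν j) = 1) ∧
    ∀ j s, ∫ z, Real.exp (s * z) ∂(ν j) ≤ Real.exp (Ca * s ^ 2)

/-- Covariance assumption: Σ psd with Tr[Σ] = d and ‖Σ‖ ≤ Ca, and `Sigh` its psd square root. -/
def CovOK (Ca : ℝ) {d : ℕ} (Sig Sigh : Matrix (Fin d) (Fin d) ℝ) : Prop :=
  Sig.PosSemidef ∧ Sigh.PosSemidef ∧ Sigh * Sigh = Sig ∧ Sig.trace = (d : ℝ) ∧ spNorm Sig ≤ Ca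

/-- Joint law of the n·d independent entries of x̄₁, …, x̄ₙ. -/
def dataMeasure (n d : ℕ) (ν : Fin d → Measure ℝ) [∀ j, IsProbabilityMeasure (ν j)] :
    Measure ((Fin n × Fin d) → ℝ) :=
  Measure.pi fun p => ν p.2

/-- The law D of a single datapoint x = Σ^{1/2} x̄. -/
def dataDist {d : ℕ} (Sigh : Matrix (Fin d) (Fin d) ℝ) (ν : Fin d → Measure ℝ)
    [∀ j, IsProbabilityMeasure (ν j)] : Measure (Fin d → ℝ) :=
  (Measure.pi fun j => ν j).map fun z => Sigh.mulVec z

/-- The data matrix X with rows xᵢ = Σ^{1/2} x̄ᵢ. -/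
def designX {n d : ℕ} (Sigh : Matrix (Fin d) (Fin d) ℝ) (ω : (Fin n × Fin d) → ℝ) :
    Matrix (Fin n) (Fin d) ℝ :=
  Matrix.of fun i j => Sigh.mulVec (fun k => ω (i, k)) j

/-- Law of the i.i.d. N(0,1) entries of the first m/2 rows of W(0). -/
def gaussMeasure (m2 d : ℕ) : Measure ((Fin m2 × Fin d) → ℝ) :=
  Measure.pi fun _ => gaussianReal 0 1

/-- Law of the i.i.d. uniform signs of the first m/2 entries of v(0) (encoded by booleans). -/
def signMeasure (m2 : ℕ) : Measure (Fin m2 → Bool) :=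
  Measure.pi fun _ => (PMF.uniformOfFintype Bool).toMeasure

/-- Symmetric initialization of the first layer: the second half duplicates the first half. -/
def symmW {m2 d : ℕ} (g : (Fin m2 × Fin d) → ℝ) : Matrix (Fin (2 * m2)) (Fin d) ℝ :=
  Matrix.of fun r j =>
    if h : (r : ℕ) < m2 then g (⟨r, h⟩, j)
    else g (⟨(r : ℕ) - m2, by have := r.isLt; omega⟩, j)

/-- Symmetric initialization of the second layer: the second half negates the first half. -/
def symmV {m2 : ℕ} (b : Fin m2 → Bool) : Fin (2 * m2) → ℝ := fun r =>
  if h : (r : ℕ) < m2 then (if b ⟨r, h⟩ then 1 else -1)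
  else (if b ⟨(r : ℕ) - m2, by have := r.isLt; omega⟩ then -1 else 1)

/-- First-layer NTK matrix. -/
def Theta1 {n m d : ℕ} (φd : ℝ → ℝ) (X : Matrix (Fin n) (Fin d) ℝ)
    (W : Matrix (Fin m) (Fin d) ℝ) : Matrix (Fin n) (Fin n) ℝ :=
  Matrix.of fun i j =>
    ((1 : ℝ) / m) * ∑ r, φd (vdot (X i) (W r) / Real.sqrt d) * φd (vdot (X j) (W r) / Real.sqrt d)
      * (vdot (X i) (X j) / d)

/-- Expected first-layer NTK matrix. -/
def Theta1Star {n d : ℕ} (φd : ℝ → ℝ) (X : Matrix (Fin n) (Fin d) ℝ) :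
    Matrix (Fin n) (Fin n) ℝ :=
  Matrix.of fun i j =>
    (∫ w, φd (vdot (X i) w / Real.sqrt d) * φd (vdot (X j) w / Real.sqrt d)
        ∂(stdGaussian (Fin d))) * (vdot (X i) (X j) / d)

/-- Θ^{lin1} = (ζ² X Xᵀ + ν² 𝟏𝟏ᵀ)/d. -/
def ThetaLin1 {n d : ℕ} (ζ ν2 : ℝ) (X : Matrix (Fin n) (Fin d) ℝ) :
    Matrix (Fin n) (Fin n) ℝ :=
  Matrix.of fun i j => (ζ ^ 2 * vdot (X i) (X j) + ν2) / d

/-- Second-layer NTK matrix. -/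
def Theta2 {n m d : ℕ} (φ : ℝ → ℝ) (X : Matrix (Fin n) (Fin d) ℝ)
    (W : Matrix (Fin m) (Fin d) ℝ) : Matrix (Fin n) (Fin n) ℝ :=
  Matrix.of fun i j =>
    ((1 : ℝ) / m) * ∑ r, φ (vdot (X i) (W r) / Real.sqrt d) * φ (vdot (X j) (W r) / Real.sqrt d)

/-- Expected second-layer NTK matrix. -/
def Theta2Star {n d : ℕ} (φ : ℝ → ℝ) (X : Matrix (Fin n) (Fin d) ℝ) :
    Matrix (Fin n) (Fin n) ℝ :=
  Matrix.of fun i j =>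
    ∫ w, φ (vdot (X i) w / Real.sqrt d) * φ (vdot (X j) w / Real.sqrt d) ∂(stdGaussian (Fin d))

/-- Θ^{lin2} = (ζ² X Xᵀ + ν²/2 𝟏𝟏ᵀ)/d + q qᵀ. -/
def ThetaLin2 {n d : ℕ} (φ φd : ℝ → ℝ) (Sig : Matrix (Fin d) (Fin d) ℝ)
    (X : Matrix (Fin n) (Fin d) ℝ) : Matrix (Fin n) (Fin n) ℝ :=
  Matrix.of fun i j =>
    (zetaOf φd ^ 2 * vdot (X i) (X j) + nuSqOf φd Sig / 2) / d + qEnt φ (X i) * qEnt φ (X j)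

/-- Θ^{lin} = (2ζ² X Xᵀ + (3/2)ν² 𝟏𝟏ᵀ)/d + q qᵀ. -/
def ThetaLinBoth {n d : ℕ} (φ φd : ℝ → ℝ) (Sig : Matrix (Fin d) (Fin d) ℝ)
    (X : Matrix (Fin n) (Fin d) ℝ) : Matrix (Fin n) (Fin n) ℝ :=
  Matrix.of fun i j =>
    (2 * zetaOf φd ^ 2 * vdot (X i) (X j) + (3 / 2) * nuSqOf φd Sig) / d
      + qEnt φ (X i) * qEnt φ (X j)

/-- First-layer Jacobian J₁(W, v) ∈ ℝ^{n × md}. -/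
def J1 {n m d : ℕ} (φd : ℝ → ℝ) (X : Matrix (Fin n) (Fin d) ℝ)
    (W : Matrix (Fin m) (Fin d) ℝ) (v : Fin m → ℝ) : Matrix (Fin n) (Fin m × Fin d) ℝ :=
  Matrix.of fun i p =>
    (1 / Real.sqrt ((m : ℝ) * d)) * v p.1 * φd (vdot (X i) (W p.1) / Real.sqrt d) * X i p.2

/-- Second-layer Jacobian J₂(W) ∈ ℝ^{n × m}. -/
def J2 {n m d : ℕ} (φ : ℝ → ℝ) (X : Matrix (Fin n) (Fin d) ℝ)
    (W : Matrix (Fin m) (Fin d) ℝ) : Matrix (Fin n) (Fin m) ℝ :=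
  Matrix.of fun i r => (1 / Real.sqrt (m : ℝ)) * φ (vdot (X i) (W r) / Real.sqrt d)

/-- Full Jacobian J(W, v) = [J₁(W,v), J₂(W)]. -/
def Jfull {n m d : ℕ} (φ φd : ℝ → ℝ) (X : Matrix (Fin n) (Fin d) ℝ)
    (W : Matrix (Fin m) (Fin d) ℝ) (v : Fin m → ℝ) :
    Matrix (Fin n) ((Fin m × Fin d) ⊕ Fin m) ℝ :=
  Matrix.of fun i p => Sum.elim (fun pq => J1 φd X W v i pq) (fun r => J2 φ X W i r) p

/-- The two-layer network f(x; W, v) = (1/√m) Σ_r v_r φ(w_rᵀ x/√d). -/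
def nnOut {m d : ℕ} (φ : ℝ → ℝ) (W : Matrix (Fin m) (Fin d) ℝ) (v : Fin m → ℝ)
    (x : Fin d → ℝ) : ℝ :=
  (1 / Real.sqrt (m : ℝ)) * ∑ r, v r * φ (vdot (W r) x / Real.sqrt d)

/-- Gradient of the empirical squared loss with respect to the first-layer weights. -/
def gradW1 {n m d : ℕ} (φ φd : ℝ → ℝ) (X : Matrix (Fin n) (Fin d) ℝ) (y : Fin n → ℝ)
    (v : Fin m → ℝ) (W : Matrix (Fin m) (Fin d) ℝ) : Matrix (Fin m) (Fin d) ℝ :=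
  Matrix.of fun r j =>
    ((1 : ℝ) / n) * ∑ i, (nnOut φ W v (X i) - y i) *
      ((1 / Real.sqrt ((m : ℝ) * d)) * v r * φd (vdot (W r) (X i) / Real.sqrt d) * X i j)

/-- Gradient of the empirical squared loss with respect to the second-layer weights. -/
def gradV2 {n m d : ℕ} (φ : ℝ → ℝ) (X : Matrix (Fin n) (Fin d) ℝ) (y : Fin n → ℝ)
    (W : Matrix (Fin m) (Fin d) ℝ) (v : Fin m → ℝ) : Fin m → ℝ := fun r =>
  ((1 : ℝ) / n) * ∑ i, (nnOut φ W v (X i) - y i) *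
    ((1 / Real.sqrt (m : ℝ)) * φ (vdot (W r) (X i) / Real.sqrt d))

/-- One gradient descent step for a linear model β ↦ βᵀψ(x), with learning rate η. -/
def linStep {n d D : ℕ} (η : ℝ) (ψ : (Fin d → ℝ) → Fin D → ℝ)
    (X : Matrix (Fin n) (Fin d) ℝ) (y : Fin n → ℝ) (β : Fin D → ℝ) : Fin D → ℝ :=
  β - (η / n) • fun k => ∑ i, (vdot β (ψ (X i)) - y i) * ψ (X i) k

/-- ψ₁(x) = (ζ x/√d, ν/√d). -/
def psi1 {d : ℕ} (φd : ℝ → ℝ) (Sig : Matrix (Fin d) (Fin d) ℝ) (x : Fin d → ℝ) :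
    Fin (d + 1) → ℝ := fun k =>
  if h : (k : ℕ) < d then zetaOf φd * x ⟨k, h⟩ / Real.sqrt d
  else Real.sqrt (nuSqOf φd Sig) / Real.sqrt d

/-- ψ₂(x) = (ζ x/√d, ν/√(2d), q(x)). -/
def psi2 {d : ℕ} (φ φd : ℝ → ℝ) (Sig : Matrix (Fin d) (Fin d) ℝ) (x : Fin d → ℝ) :
    Fin (d + 2) → ℝ := fun k =>
  if h : (k : ℕ) < d then zetaOf φd * x ⟨k, h⟩ / Real.sqrt d
  else if (k : ℕ) = d then Real.sqrt (nuSqOf φd Sig) / Real.sqrt (2 * (d : ℝ))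
  else qEnt φ x

/-- ψ(x) = (√2 ζ x/√d, √(3/2) ν/√d, q(x)). -/
def psiBoth {d : ℕ} (φ φd : ℝ → ℝ) (Sig : Matrix (Fin d) (Fin d) ℝ) (x : Fin d → ℝ) :
    Fin (d + 2) → ℝ := fun k =>
  if h : (k : ℕ) < d then Real.sqrt 2 * zetaOf φd * x ⟨k, h⟩ / Real.sqrt d
  else if (k : ℕ) = d then Real.sqrt (3 / 2) * Real.sqrt (nuSqOf φd Sig) / Real.sqrt d
  else qEnt φ x

/-- Circular patch x[k:k+q] of size q (indices mod d). -/
def patch {d : ℕ} (q : ℕ) (hd : 0 < d) (x : Fin d → ℝ) (k : Fin d) : Fin q → ℝ :=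
  fun l => x ⟨((k : ℕ) + (l : ℕ)) % d, Nat.mod_lt _ hd⟩

/-- The error function. -/
def erf (z : ℝ) : ℝ := (2 / Real.sqrt Real.pi) * ∫ t in (0 : ℝ)..z, Real.exp (-(t ^ 2))

/-- The derivative of the error function. -/
def erfDeriv (z : ℝ) : ℝ := (2 / Real.sqrt Real.pi) * Real.exp (-(z ^ 2))

/-- The infinite-width NTK matrix of the one-hidden-layer CNN. -/
def ThetaCNN {n d : ℕ} (q : ℕ) (hd : 0 < d) (φ φd : ℝ → ℝ)
    (X : Matrix (Fin n) (Fin d) ℝ) : Matrix (Fin n) (Fin n) ℝ :=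
  Matrix.of fun i j =>
    ∫ w, (((1 : ℝ) / d) * ∑ k, φ (vdot w (patch q hd (X i) k) / Real.sqrt q)
            * φ (vdot w (patch q hd (X j) k) / Real.sqrt q)
          + ((1 : ℝ) / d) * ∑ k, φd (vdot w (patch q hd (X i) k) / Real.sqrt q)
            * φd (vdot w (patch q hd (X j) k) / Real.sqrt q)
            * (vdot (patch q hd (X i) k) (patch q hd (X j) k) / q))
      ∂(stdGaussian (Fin q))

/-- Uniform measure on the boolean hypercube (encoding {±1}^{n×d}). -/
def hcubeMeasure (n d : ℕ) : Measure ((Fin n × Fin d) → Bool) :=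
  Measure.pi fun _ => (PMF.uniformOfFintype Bool).toMeasure

/-- Data matrix of hypercube data. -/
def hcubeX {n d : ℕ} (ω : (Fin n × Fin d) → Bool) : Matrix (Fin n) (Fin d) ℝ :=
  Matrix.of fun i j => if ω (i, j) then 1 else -1


/-!
Write `s = η / n`, `K = Φ Φᵀ` and `r(t) = f(θ(t)) - y`, `ρ(t) = Φ ω(t) - y` for the two residuals.
The linear residual follows `ρ(t+1) = (1 - s K) ρ(t)`, and `1 - s K` contracts since
`s ‖K‖ ≤ 1`. While `θ(t)` and `θ(t+1)` lie in the `R`-ball, the mean value inequality along the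
segment between them and `‖J(θ₁) J(θ₂)ᵀ - K‖ ≤ ε` show that `r` follows the same recursion up to
an error `s ε ‖r(t)‖`; the errors add up to `‖r(t) - ρ(t)‖ ≤ 2 s ε √n t`. The iterates stay in
the ball because `‖θ(t) - θ(0)‖² ≤ t Σ ‖θ(i+1) - θ(i)‖²` and the energy inequality
`‖r(t+1)‖² ≤ ‖r(t)‖² - s ‖Φᵀ r(t)‖² + 3 s ε ‖r(t)‖²` bounds `Σ s² ‖J(θ(i))ᵀ r(i)‖²` by `5 s n`,
so that `‖θ(t) - θ(0)‖² ≤ 5 η t ≤ R²`. The linear iterates `ω` are the case `f = Φ ·`,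
`J ≡ Φ`, `ε = 0`.
-/

open scoped RealInnerProductSpace Matrix Matrix.Norms.L2Operator
open WithLp

section ResidualStep

variable {E F : Type*} [NormedAddCommGroup E] [InnerProductSpace ℝ E] [CompleteSpace E]
  [NormedAddCommGroup F] [InnerProductSpace ℝ F] [CompleteSpace F] {A : F →L[ℝ] E} {s : ℝ}

/-- Gradient descent on `ω ↦ ‖A ω - y‖² / 2` with step `s` maps the residual `v = A ω - y` to
`residualStep A s v`. -/
def residualStep (A : F →L[ℝ] E) (s : ℝ) (v : E) : E := v - s • A (A.adjoint v)

theorem norm_residualStep_sq_le (hs : 0 ≤ s) (hsA : s * ‖A‖ ^ 2 ≤ 1) (v : E) :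
    ‖residualStep A s v‖ ^ 2 ≤ ‖v‖ ^ 2 - s * ‖A.adjoint v‖ ^ 2 := by
  have hinner : ⟪v, s • A (A.adjoint v)⟫ = s * ‖A.adjoint v‖ ^ 2 := by
    rw [real_inner_smul_right, ← ContinuousLinearMap.adjoint_inner_left,
      real_inner_self_eq_norm_sq]
  have hnorm : ‖s • A (A.adjoint v)‖ ≤ s * (‖A‖ * ‖A.adjoint v‖) := by
    rw [norm_smul, Real.norm_of_nonneg hs]
    exact mul_le_mul_of_nonneg_left (A.le_opNorm _) hs
  have hsq : ‖s • A (A.adjoint v)‖ ^ 2 ≤ s * ‖A.adjoint v‖ ^ 2 :=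
    calc ‖s • A (A.adjoint v)‖ ^ 2 ≤ (s * (‖A‖ * ‖A.adjoint v‖)) ^ 2 :=
          pow_le_pow_left₀ (norm_nonneg _) hnorm 2
      _ = s * (s * ‖A‖ ^ 2) * ‖A.adjoint v‖ ^ 2 := by ring
      _ ≤ s * 1 * ‖A.adjoint v‖ ^ 2 := by gcongr
      _ = s * ‖A.adjoint v‖ ^ 2 := by rw [mul_one]
  rw [residualStep, norm_sub_sq_real, hinner]
  linarith

theorem norm_residualStep_le (hs : 0 ≤ s) (hsA : s * ‖A‖ ^ 2 ≤ 1) (v : E) :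
    ‖residualStep A s v‖ ≤ ‖v‖ :=
  (pow_le_pow_iff_left₀ (norm_nonneg _) (norm_nonneg _) two_ne_zero).mp <| by
    nlinarith [norm_residualStep_sq_le hs hsA v, sq_nonneg ‖A.adjoint v‖]

theorem mul_norm_adjoint_sq_le (hs : 0 ≤ s) (hsA : s * ‖A‖ ^ 2 ≤ 1) (v : E) :
    s * ‖A.adjoint v‖ ^ 2 ≤ ‖v‖ ^ 2 := by
  nlinarith [norm_residualStep_sq_le hs hsA v, sq_nonneg ‖residualStep A s v‖]

theorem norm_sq_le_of_norm_sub_residualStep_le (hs : 0 ≤ s) (hsA : s * ‖A‖ ^ 2 ≤ 1) {δ : ℝ}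
    (hδ : 0 ≤ δ) (hδ1 : δ ≤ 1) {v w : E} (h : ‖w - residualStep A s v‖ ≤ δ * ‖v‖) :
    ‖w‖ ^ 2 ≤ ‖v‖ ^ 2 - s * ‖A.adjoint v‖ ^ 2 + 3 * δ * ‖v‖ ^ 2 := by
  set u := residualStep A s v
  have hw : ‖w‖ ≤ ‖u‖ + δ * ‖v‖ := norm_le_norm_add_norm_sub' w u |>.trans (by gcongr)
  calc ‖w‖ ^ 2 ≤ (‖u‖ + δ * ‖v‖) ^ 2 := pow_le_pow_left₀ (norm_nonneg _) hw 2
    _ = ‖u‖ ^ 2 + 2 * δ * ‖u‖ * ‖v‖ + δ ^ 2 * ‖v‖ ^ 2 := by ring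
    _ ≤ (‖v‖ ^ 2 - s * ‖A.adjoint v‖ ^ 2) + 2 * δ * ‖v‖ * ‖v‖ + δ * ‖v‖ ^ 2 := by
        gcongr
        · exact norm_residualStep_sq_le hs hsA v
        · exact norm_residualStep_le hs hsA v
        · nlinarith
    _ = ‖v‖ ^ 2 - s * ‖A.adjoint v‖ ^ 2 + 3 * δ * ‖v‖ ^ 2 := by ring

end ResidualStep

section PerturbedResiduals

variable {E F : Type*} [NormedAddCommGroup E] [InnerProductSpace ℝ E] [CompleteSpace E]
  [NormedAddCommGroup F] [InnerProductSpace ℝ F] [CompleteSpace F] {A : F →L[ℝ] E} {s ε : ℝ}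
  {r : ℕ → E}

theorem norm_le_norm_zero_of_residualStep (hs : 0 ≤ s) (hsA : s * ‖A‖ ^ 2 ≤ 1) {ρ : ℕ → E}
    (hρ : ∀ t, ρ (t + 1) = residualStep A s (ρ t)) (t : ℕ) : ‖ρ t‖ ≤ ‖ρ 0‖ := by
  induction t with
  | zero => rfl
  | succ t ih => exact (hρ t ▸ norm_residualStep_le hs hsA (ρ t)).trans ih

theorem norm_sub_le_of_norm_sub_residualStep_le (hs : 0 ≤ s) (hε : 0 ≤ ε)
    (hsA : s * ‖A‖ ^ 2 ≤ 1) {ρ : ℕ → E} (hρ : ∀ t, ρ (t + 1) = residualStep A s (ρ t))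
    (h0 : ρ 0 = r 0) {b : ℝ} (hb : ‖r 0‖ ≤ b) {t : ℕ} (ht : 2 * s * ε * t ≤ 1)
    (hr : ∀ i < t, ‖r (i + 1) - residualStep A s (r i)‖ ≤ s * ε * ‖r i‖) :
    ‖r t - ρ t‖ ≤ 2 * s * ε * b * t := by
  induction t with
  | zero => simp [h0]
  | succ t ih =>
    push_cast at ht ⊢
    have hb0 : 0 ≤ b := (norm_nonneg _).trans hb
    have ht' : 2 * s * ε * t ≤ 1 := by nlinarith [mul_nonneg hs hε]
    have ih := ih ht' fun i hi => hr i (by omega)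
    have hρt : ‖ρ t‖ ≤ b := (norm_le_norm_zero_of_residualStep hs hsA hρ t).trans (h0 ▸ hb)
    have hrt : ‖r t‖ ≤ 2 * b :=
      calc ‖r t‖ ≤ ‖r t - ρ t‖ + ‖ρ t‖ := norm_le_norm_sub_add _ _
        _ ≤ 2 * s * ε * b * t + b := add_le_add ih hρt
        _ ≤ 2 * b := by nlinarith [mul_le_mul_of_nonneg_right ht' hb0]
    have hsplit : r (t + 1) - ρ (t + 1)
        = (r (t + 1) - residualStep A s (r t)) + residualStep A s (r t - ρ t) := by
      simp only [hρ, residualStep, map_sub, smul_sub]; abel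
    calc ‖r (t + 1) - ρ (t + 1)‖
        ≤ s * ε * ‖r t‖ + ‖r t - ρ t‖ := by
          rw [hsplit]
          exact (norm_add_le _ _).trans
            (add_le_add (hr t (by omega)) (norm_residualStep_le hs hsA _))
      _ ≤ s * ε * (2 * b) + 2 * s * ε * b * t := by gcongr
      _ = 2 * s * ε * b * (t + 1) := by ring

/-- Compare with the exact iteration started at `r 0`, whose norm does not increase. -/
theorem norm_le_two_mul_of_norm_sub_residualStep_le (hs : 0 ≤ s) (hε : 0 ≤ ε)
    (hsA : s * ‖A‖ ^ 2 ≤ 1) {b : ℝ} (hb : ‖r 0‖ ≤ b) {t : ℕ} (ht : 2 * s * ε * t ≤ 1)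
    (hr : ∀ i < t, ‖r (i + 1) - residualStep A s (r i)‖ ≤ s * ε * ‖r i‖) :
    ‖r t‖ ≤ 2 * b := by
  set ρ : ℕ → E := fun i => (residualStep A s)^[i] (r 0)
  have hρ : ∀ i, ρ (i + 1) = residualStep A s (ρ i) := fun i =>
    Function.iterate_succ_apply' _ i _
  calc ‖r t‖ ≤ ‖r t - ρ t‖ + ‖ρ t‖ := norm_le_norm_sub_add _ _
    _ ≤ 2 * s * ε * b * t + b :=
        add_le_add (norm_sub_le_of_norm_sub_residualStep_le (r := r) hs hε hsA hρ rfl hb ht hr)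
          ((norm_le_norm_zero_of_residualStep hs hsA hρ t).trans hb)
    _ ≤ 2 * b := by nlinarith [(norm_nonneg _).trans hb]

theorem norm_sq_add_sum_norm_adjoint_sq_le (hs : 0 ≤ s) (hε : 0 ≤ ε) (hsA : s * ‖A‖ ^ 2 ≤ 1)
    (hsε : s * ε ≤ 1) {t : ℕ}
    (hr : ∀ i < t, ‖r (i + 1) - residualStep A s (r i)‖ ≤ s * ε * ‖r i‖) :
    ‖r t‖ ^ 2 + s * ∑ i ∈ Finset.range t, ‖A.adjoint (r i)‖ ^ 2
      ≤ ‖r 0‖ ^ 2 + 3 * (s * ε) * ∑ i ∈ Finset.range t, ‖r i‖ ^ 2 := by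
  induction t with
  | zero => simp
  | succ t ih =>
    have ih := ih fun i hi => hr i (by omega)
    have hstep := norm_sq_le_of_norm_sub_residualStep_le hs hsA (mul_nonneg hs hε) hsε
      (hr t (by omega))
    rw [Finset.sum_range_succ, Finset.sum_range_succ]
    linarith

end PerturbedResiduals

theorem norm_sub_sq_le_mul_sum_norm_sub_sq {P : Type*} [SeminormedAddCommGroup P] (θ : ℕ → P)
    (t : ℕ) : ‖θ t - θ 0‖ ^ 2 ≤ t * ∑ i ∈ Finset.range t, ‖θ (i + 1) - θ i‖ ^ 2 := by
  calc ‖θ t - θ 0‖ ^ 2 ≤ (∑ i ∈ Finset.range t, ‖θ (i + 1) - θ i‖) ^ 2 := by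
        rw [← Finset.sum_range_sub]
        exact pow_le_pow_left₀ (norm_nonneg _) (norm_sum_le _ _) 2
    _ ≤ t * ∑ i ∈ Finset.range t, ‖θ (i + 1) - θ i‖ ^ 2 := by
        simpa using sq_sum_le_card_mul_sum_sq (s := Finset.range t)

section ParameterBall

variable {E F P : Type*} [NormedAddCommGroup E] [InnerProductSpace ℝ E] [CompleteSpace E]
  [NormedAddCommGroup F] [InnerProductSpace ℝ F] [CompleteSpace F]
  [NormedAddCommGroup P] [NormedSpace ℝ P] {A : F →L[ℝ] E} {s ε : ℝ} {r : ℕ → E} {θ G : ℕ → P}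

theorem sum_norm_sub_sq_le_of_norm_sub_residualStep_le (hs : 0 ≤ s) (hε : 0 ≤ ε)
    (hsA : s * ‖A‖ ^ 2 ≤ 1) (hθ : ∀ t, θ (t + 1) = θ t - s • G t) {b : ℝ} {k : ℕ}
    (hG : ∀ i ≤ k, ‖G i‖ ^ 2 ≤ ‖A.adjoint (r i)‖ ^ 2 + ε * ‖r i‖ ^ 2)
    (hr : ∀ i < k, ‖r (i + 1) - residualStep A s (r i)‖ ≤ s * ε * ‖r i‖)
    (hb : ‖r 0‖ ≤ b) (hk : s * ε * (k + 1) ≤ 1 / 4) :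
    ∑ i ∈ Finset.range (k + 1), ‖θ (i + 1) - θ i‖ ^ 2 ≤ s * (5 * b ^ 2) := by
  have hsε : 0 ≤ s * ε := mul_nonneg hs hε
  have hrb : ∀ i ≤ k, ‖r i‖ ^ 2 ≤ 4 * b ^ 2 := fun i hi => by
    have hik : (i : ℝ) ≤ k := by exact_mod_cast hi
    have := norm_le_two_mul_of_norm_sub_residualStep_le hs hε hsA hb (t := i) (by nlinarith)
      fun j hj => hr j (by omega)
    nlinarith [norm_nonneg (r i)]
  have hsum_r : ∑ i ∈ Finset.range (k + 1), ‖r i‖ ^ 2 ≤ (k + 1) * (4 * b ^ 2) := by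
    simpa using Finset.sum_le_sum fun i hi => hrb i (Finset.mem_range_succ_iff.mp hi)
  -- the energy inequality covers the steps before `k`; the last one is bounded by `‖r k‖²`
  have henergy : s * ∑ i ∈ Finset.range (k + 1), ‖A.adjoint (r i)‖ ^ 2
      ≤ b ^ 2 + 3 * (s * ε) * ∑ i ∈ Finset.range (k + 1), ‖r i‖ ^ 2 := by
    have h := norm_sq_add_sum_norm_adjoint_sq_le hs hε hsA (by nlinarith) hr
    have hlast := mul_norm_adjoint_sq_le hs hsA (r k)
    rw [Finset.sum_range_succ, Finset.sum_range_succ _ k]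
    nlinarith [pow_le_pow_left₀ (norm_nonneg _) hb 2, sq_nonneg ‖r k‖]
  have hstep : ∀ i ∈ Finset.range (k + 1), ‖θ (i + 1) - θ i‖ ^ 2
      ≤ s * (s * ‖A.adjoint (r i)‖ ^ 2) + s * (s * ε) * ‖r i‖ ^ 2 := fun i hi => by
    rw [hθ, sub_sub_cancel_left, norm_neg, norm_smul, Real.norm_of_nonneg hs, mul_pow]
    nlinarith [hG i (Finset.mem_range_succ_iff.mp hi), sq_nonneg s]
  calc ∑ i ∈ Finset.range (k + 1), ‖θ (i + 1) - θ i‖ ^ 2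
      ≤ s * (s * ∑ i ∈ Finset.range (k + 1), ‖A.adjoint (r i)‖ ^ 2)
        + s * (s * ε) * ∑ i ∈ Finset.range (k + 1), ‖r i‖ ^ 2 := by
        simpa only [Finset.sum_add_distrib, Finset.mul_sum] using Finset.sum_le_sum hstep
    _ ≤ s * (b ^ 2 + 4 * (s * ε) * ((k + 1) * (4 * b ^ 2))) := by
        nlinarith [mul_le_mul_of_nonneg_left hsum_r hsε]
    _ ≤ s * (5 * b ^ 2) := by
        gcongr
        nlinarith [mul_le_mul_of_nonneg_right hk (sq_nonneg b)]

theorem norm_sub_le_of_perturbed_gradientDescent (hs : 0 ≤ s) (hε : 0 ≤ ε)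
    (hsA : s * ‖A‖ ^ 2 ≤ 1) (hθ : ∀ t, θ (t + 1) = θ t - s • G t) {R b : ℝ}
    (hG : ∀ t, ‖θ t - θ 0‖ ≤ R → ‖G t‖ ^ 2 ≤ ‖A.adjoint (r t)‖ ^ 2 + ε * ‖r t‖ ^ 2)
    (hr : ∀ t, ‖θ t - θ 0‖ ≤ R → ‖θ (t + 1) - θ 0‖ ≤ R →
      ‖r (t + 1) - residualStep A s (r t)‖ ≤ s * ε * ‖r t‖)
    (hb : ‖r 0‖ ≤ b) (hR : 0 ≤ R) {T : ℕ} (hT₁ : s * ε * T ≤ 1 / 4)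
    (hT₂ : 5 * (s * T * b ^ 2) ≤ R ^ 2) :
    ∀ t ≤ T, ‖θ t - θ 0‖ ≤ R := by
  intro t
  induction t using Nat.strong_induction_on with
  | _ t ih =>
  intro htT
  rcases t with _ | k
  · simpa using hR
  have hball : ∀ i ≤ k, ‖θ i - θ 0‖ ≤ R := fun i hi => ih i (by omega) (by omega)
  have hkT : (k + 1 : ℝ) ≤ T := by exact_mod_cast htT
  have hsteps := sum_norm_sub_sq_le_of_norm_sub_residualStep_le hs hε hsA hθ
    (fun i hi => hG i (hball i hi)) (fun i hi => hr i (hball i hi.le) (hball (i + 1) hi)) hb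
    ((mul_le_mul_of_nonneg_left hkT (mul_nonneg hs hε)).trans hT₁)
  have hsq : ‖θ (k + 1) - θ 0‖ ^ 2 ≤ R ^ 2 :=
    calc ‖θ (k + 1) - θ 0‖ ^ 2
        ≤ (k + 1 : ℕ) * ∑ i ∈ Finset.range (k + 1), ‖θ (i + 1) - θ i‖ ^ 2 :=
          norm_sub_sq_le_mul_sum_norm_sub_sq θ (k + 1)
      _ ≤ T * (s * (5 * b ^ 2)) := by push_cast; gcongr
      _ ≤ R ^ 2 := by linarith
  exact (pow_le_pow_iff_left₀ (norm_nonneg _) hR two_ne_zero).mp hsq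

end ParameterBall

theorem norm_image_add_sub_sub_le_of_hasFDerivAt {P E : Type*} [NormedAddCommGroup P]
    [NormedSpace ℝ P] [NormedAddCommGroup E] [NormedSpace ℝ E] {f : P → E} {f' : P → P →L[ℝ] E}
    {x d : P} {v : E} {C : ℝ}
    (hf : ∀ u ∈ Set.Icc (0 : ℝ) 1, HasFDerivAt f (f' (x + u • d)) (x + u • d))
    (hC : ∀ u ∈ Set.Ico (0 : ℝ) 1, ‖f' (x + u • d) d - v‖ ≤ C) :
    ‖f (x + d) - f x - v‖ ≤ C := by
  have hg : ∀ u ∈ Set.Icc (0 : ℝ) 1, HasDerivWithinAt (fun u : ℝ => f (x + u • d) - u • v)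
      (f' (x + u • d) d - v) (Set.Icc 0 1) u := fun u hu => by
    have hline : HasDerivAt (fun u : ℝ => x + u • d) d u := by
      simpa using ((hasDerivAt_id u).smul_const d).const_add x
    convert (((hf u hu).comp_hasDerivAt u hline).sub
      ((hasDerivAt_id u).smul_const v)).hasDerivWithinAt using 1
    · rfl
    · rw [one_smul]
  simpa [sub_right_comm] using norm_image_sub_le_of_norm_deriv_le_segment_01' hg hC

section EuclideanMatrix

variable {ι κ : Type*} [Fintype ι] [Fintype κ]

theorem vnorm_eq_norm_toLp (x : ι → ℝ) : vnorm x = ‖toLp 2 x‖ := by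
  simp [vnorm, EuclideanSpace.norm_eq]

theorem vnorm_sub (x z : ι → ℝ) : vnorm (x - z) = ‖toLp 2 x - toLp 2 z‖ := by
  rw [vnorm_eq_norm_toLp, toLp_sub]

variable [DecidableEq κ]

abbrev euclideanCLM (A : Matrix ι κ ℝ) : EuclideanSpace ℝ κ →L[ℝ] EuclideanSpace ℝ ι :=
  (Matrix.toEuclideanLin A).toContinuousLinearMap

theorem euclideanCLM_toLp (A : Matrix ι κ ℝ) (x : κ → ℝ) :
    euclideanCLM A (toLp 2 x) = toLp 2 (A *ᵥ x) := rfl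

theorem norm_euclideanCLM (A : Matrix ι κ ℝ) : ‖euclideanCLM A‖ = ‖A‖ := rfl

theorem spNorm_eq_norm (A : Matrix ι κ ℝ) : spNorm A = ‖A‖ := by
  rw [← norm_euclideanCLM, ← ContinuousLinearMap.sSup_unitClosedBall_eq_norm, spNorm]
  congr 1
  ext c
  simp only [Set.mem_ofPred_eq, Set.mem_image, mem_closedBall_zero_iff, vnorm_eq_norm_toLp]
  constructor
  · rintro ⟨x, hx, rfl⟩
    exact ⟨toLp 2 x, hx, rfl⟩
  · rintro ⟨x, hx, rfl⟩
    exact ⟨x.ofLp, hx, rfl⟩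

theorem norm_toLp_mulVec_le (A : Matrix ι κ ℝ) (x : κ → ℝ) :
    ‖toLp 2 (A *ᵥ x)‖ ≤ ‖A‖ * ‖toLp 2 x‖ :=
  (euclideanCLM A).le_opNorm (toLp 2 x)

variable [DecidableEq ι]

theorem adjoint_euclideanCLM (A : Matrix ι κ ℝ) :
    (euclideanCLM A).adjoint = euclideanCLM Aᵀ := by
  rw [← LinearMap.adjoint_toContinuousLinearMap, ← Matrix.toEuclideanLin_conjTranspose_eq_adjoint,
    Matrix.conjTranspose_eq_transpose_of_trivial]

theorem adjoint_euclideanCLM_toLp (A : Matrix ι κ ℝ) (v : ι → ℝ) :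
    (euclideanCLM A).adjoint (toLp 2 v) = toLp 2 (Aᵀ *ᵥ v) := by
  rw [adjoint_euclideanCLM, euclideanCLM_toLp]

theorem norm_mul_transpose_self (A : Matrix ι κ ℝ) : ‖A * Aᵀ‖ = ‖euclideanCLM A‖ ^ 2 := by
  have hAt : ‖Aᵀ‖ = ‖A‖ := by
    rw [← Matrix.conjTranspose_eq_transpose_of_trivial, Matrix.l2_opNorm_conjTranspose]
  rw [norm_euclideanCLM, sq, ← hAt]
  simpa [Matrix.conjTranspose_eq_transpose_of_trivial] using
    Matrix.l2_opNorm_conjTranspose_mul_self Aᵀ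

theorem norm_toLp_transpose_mulVec_sq (A : Matrix ι κ ℝ) (v : ι → ℝ) :
    ‖toLp 2 (Aᵀ *ᵥ v)‖ ^ 2 = ⟪toLp 2 v, toLp 2 ((A * Aᵀ) *ᵥ v)⟫ := by
  rw [← real_inner_self_eq_norm_sq, ← Matrix.mulVec_mulVec, ← euclideanCLM_toLp A,
    ← adjoint_euclideanCLM_toLp, ContinuousLinearMap.adjoint_inner_left]

theorem toLp_residual_linearStep (A : Matrix ι κ ℝ) (y : ι → ℝ) (s : ℝ) (w : κ → ℝ) :
    toLp 2 (A *ᵥ (w - s • Aᵀ *ᵥ (A *ᵥ w - y)) - y)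
      = residualStep (euclideanCLM A) s (toLp 2 (A *ᵥ w - y)) := by
  rw [residualStep, adjoint_euclideanCLM_toLp, euclideanCLM_toLp, Matrix.mulVec_sub,
    Matrix.mulVec_smul, Matrix.mulVec_mulVec, ← toLp_smul, ← toLp_sub]
  congr 1
  abel

theorem norm_toLp_transpose_mulVec_sq_le {μ : Type*} [Fintype μ] [DecidableEq μ]
    {A : Matrix ι κ ℝ} {B : Matrix ι μ ℝ} {ε : ℝ}
    (hAB : ‖B * Bᵀ - A * Aᵀ‖ ≤ ε) (v : ι → ℝ) :
    ‖toLp 2 (Bᵀ *ᵥ v)‖ ^ 2 ≤ ‖toLp 2 (Aᵀ *ᵥ v)‖ ^ 2 + ε * ‖toLp 2 v‖ ^ 2 := by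
  have hdiff : ‖toLp 2 (Bᵀ *ᵥ v)‖ ^ 2 - ‖toLp 2 (Aᵀ *ᵥ v)‖ ^ 2
      = ⟪toLp 2 v, toLp 2 ((B * Bᵀ - A * Aᵀ) *ᵥ v)⟫ := by
    rw [norm_toLp_transpose_mulVec_sq, norm_toLp_transpose_mulVec_sq, Matrix.sub_mulVec,
      toLp_sub, inner_sub_right]
  have hle : ⟪toLp 2 v, toLp 2 ((B * Bᵀ - A * Aᵀ) *ᵥ v)⟫ ≤ ε * ‖toLp 2 v‖ ^ 2 :=
    calc _ ≤ ‖toLp 2 v‖ * ‖toLp 2 ((B * Bᵀ - A * Aᵀ) *ᵥ v)‖ := real_inner_le_norm _ _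
      _ ≤ ‖toLp 2 v‖ * (ε * ‖toLp 2 v‖) := by
          gcongr
          exact (norm_toLp_mulVec_le _ _).trans (by gcongr)
      _ = ε * ‖toLp 2 v‖ ^ 2 := by ring
  linarith

end EuclideanMatrix

section NonlinearStep

variable {ι κ : Type*} [Fintype ι] [Fintype κ] [DecidableEq ι]

theorem norm_toLp_gradientStep_sub_le {f : (κ → ℝ) → ι → ℝ} {J : (κ → ℝ) → Matrix ι κ ℝ}
    (hf : ∀ ξ, HasFDerivAt f (Matrix.mulVecLin (J ξ)).toContinuousLinearMap ξ)
    {K : Matrix ι ι ℝ} {s ε : ℝ} (hs : 0 ≤ s) (θ : κ → ℝ) (v : ι → ℝ)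
    (hJ : ∀ u ∈ Set.Icc (0 : ℝ) 1, ‖J (θ - u • s • (J θ)ᵀ *ᵥ v) * (J θ)ᵀ - K‖ ≤ ε) :
    ‖toLp 2 (f (θ - s • (J θ)ᵀ *ᵥ v) - f θ + s • K *ᵥ v)‖ ≤ s * ε * ‖toLp 2 v‖ := by
  set e := (PiLp.continuousLinearEquiv 2 ℝ fun _ : ι => ℝ).symm.toContinuousLinearMap
  set d := -(s • (J θ)ᵀ *ᵥ v)
  have hseg : ∀ u : ℝ, θ + u • d = θ - u • s • (J θ)ᵀ *ᵥ v := fun u => by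
    simp only [d, smul_neg, sub_eq_add_neg]
  have hmv := norm_image_add_sub_sub_le_of_hasFDerivAt (f := e ∘ f)
    (f' := fun ξ => e.comp (Matrix.mulVecLin (J ξ)).toContinuousLinearMap) (x := θ) (d := d)
    (v := -(s • toLp 2 (K *ᵥ v))) (C := s * ε * ‖toLp 2 v‖)
    (fun u _ => e.hasFDerivAt.comp _ (hf _)) fun u hu => by
      have hdir : e.comp (Matrix.mulVecLin (J (θ + u • d))).toContinuousLinearMap d
          - -(s • toLp 2 (K *ᵥ v))
          = -(s • toLp 2 ((J (θ + u • d) * (J θ)ᵀ - K) *ᵥ v)) := by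
        simp [e, d, Matrix.sub_mulVec, Matrix.mulVec_neg, Matrix.mulVec_smul,
          Matrix.mulVec_mulVec, smul_sub, neg_add_eq_sub]
      rw [hdir, norm_neg, norm_smul, Real.norm_of_nonneg hs, mul_assoc]
      gcongr
      exact (norm_toLp_mulVec_le _ _).trans
        (by gcongr; exact hseg u ▸ hJ u (Set.Ico_subset_Icc_self hu))
  have heq : toLp 2 (f (θ - s • (J θ)ᵀ *ᵥ v) - f θ + s • K *ᵥ v)
      = (e ∘ f) (θ + d) - (e ∘ f) θ - -(s • toLp 2 (K *ᵥ v)) := by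
    simp [e, d, sub_eq_add_neg]
  rw [heq]
  exact hmv

theorem norm_toLp_sub_residualStep_le_of_mem_ball {μ : Type*} [Fintype μ] [DecidableEq μ]
    {f : (κ → ℝ) → ι → ℝ} {J : (κ → ℝ) → Matrix ι κ ℝ}
    (hf : ∀ ξ, HasFDerivAt f (Matrix.mulVecLin (J ξ)).toContinuousLinearMap ξ)
    {Φ : Matrix ι μ ℝ} {θ₀ : κ → ℝ} {R ε s : ℝ}
    (hJ : ∀ θ₁ θ₂ : κ → ℝ, vnorm (θ₁ - θ₀) ≤ R → vnorm (θ₂ - θ₀) ≤ R →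
      spNorm (J θ₁ * (J θ₂)ᵀ - Φ * Φᵀ) ≤ ε)
    (hs : 0 ≤ s) (y : ι → ℝ) {θ : κ → ℝ} (hθ : vnorm (θ - θ₀) ≤ R)
    (hθ' : vnorm (θ - s • (J θ)ᵀ *ᵥ (f θ - y) - θ₀) ≤ R) :
    ‖toLp 2 (f (θ - s • (J θ)ᵀ *ᵥ (f θ - y)) - y)
        - residualStep (euclideanCLM Φ) s (toLp 2 (f θ - y))‖ ≤ s * ε * ‖toLp 2 (f θ - y)‖ := by
  have hseg : ∀ u ∈ Set.Icc (0 : ℝ) 1,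
      vnorm (θ - u • s • (J θ)ᵀ *ᵥ (f θ - y) - θ₀) ≤ R := fun u hu => by
    rw [vnorm_sub, ← mem_closedBall_iff_norm] at hθ hθ' ⊢
    convert (convex_closedBall _ R).add_smul_sub_mem hθ hθ' hu using 1
    simp [smul_neg, sub_eq_add_neg]
  have hstep := norm_toLp_gradientStep_sub_le hf (K := Φ * Φᵀ) hs θ (f θ - y) fun u hu => by
    rw [← spNorm_eq_norm]
    exact hJ _ _ (hseg u hu) hθ
  convert hstep using 2
  rw [residualStep, adjoint_euclideanCLM_toLp, euclideanCLM_toLp, Matrix.mulVec_mulVec]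
  simp only [toLp_sub, toLp_add, toLp_smul]
  abel

end NonlinearStep

section GradientDescentIterates

variable {ι κ μ : Type*} [Fintype ι] [DecidableEq ι] [Fintype κ] [Fintype μ] [DecidableEq μ]
  {f : (κ → ℝ) → ι → ℝ} {J : (κ → ℝ) → Matrix ι κ ℝ} {Φ : Matrix ι μ ℝ} {y : ι → ℝ}
  {θ₀ : κ → ℝ} {s ε R b : ℝ}

theorem vnorm_iterSeq_sub_le [DecidableEq κ]
    (hf : ∀ ξ, HasFDerivAt f (Matrix.mulVecLin (J ξ)).toContinuousLinearMap ξ)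
    (hJ : ∀ θ₁ θ₂ : κ → ℝ, vnorm (θ₁ - θ₀) ≤ R → vnorm (θ₂ - θ₀) ≤ R →
      spNorm (J θ₁ * (J θ₂)ᵀ - Φ * Φᵀ) ≤ ε)
    (hs : 0 ≤ s) (hε : 0 ≤ ε) (hsΦ : s * ‖euclideanCLM Φ‖ ^ 2 ≤ 1)
    (hb : ‖toLp 2 (f θ₀ - y)‖ ≤ b) (hR : 0 ≤ R) {T : ℕ} (hT₁ : s * ε * T ≤ 1 / 4)
    (hT₂ : 5 * (s * T * b ^ 2) ≤ R ^ 2) :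
    ∀ t ≤ T, vnorm (iterSeq (fun θ => θ - s • (J θ)ᵀ *ᵥ (f θ - y)) θ₀ t - θ₀) ≤ R := by
  set θ := iterSeq (fun θ => θ - s • (J θ)ᵀ *ᵥ (f θ - y)) θ₀
  have hball := norm_sub_le_of_perturbed_gradientDescent (A := euclideanCLM Φ)
    (r := fun i => toLp 2 (f (θ i) - y)) (θ := fun i => toLp 2 (θ i))
    (G := fun i => toLp 2 ((J (θ i))ᵀ *ᵥ (f (θ i) - y))) hs hε hsΦ
    (fun i => by simp only [θ, iterSeq, toLp_sub, toLp_smul])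
    (fun i hi => by
      have hi : vnorm (θ i - θ₀) ≤ R := (vnorm_sub _ _).trans_le hi
      rw [adjoint_euclideanCLM_toLp]
      exact norm_toLp_transpose_mulVec_sq_le (by rw [← spNorm_eq_norm]; exact hJ _ _ hi hi) _)
    (fun i hi hi' => norm_toLp_sub_residualStep_le_of_mem_ball hf hJ hs y
      ((vnorm_sub _ _).trans_le hi) ((vnorm_sub _ _).trans_le hi'))
    hb hR hT₁ hT₂
  exact fun t ht => (vnorm_sub _ _).trans_le (hball t ht)

theorem vnorm_iterSeq_sub_mulVec_iterSeq_le
    (hf : ∀ ξ, HasFDerivAt f (Matrix.mulVecLin (J ξ)).toContinuousLinearMap ξ)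
    (hJ : ∀ θ₁ θ₂ : κ → ℝ, vnorm (θ₁ - θ₀) ≤ R → vnorm (θ₂ - θ₀) ≤ R →
      spNorm (J θ₁ * (J θ₂)ᵀ - Φ * Φᵀ) ≤ ε)
    (hs : 0 ≤ s) (hε : 0 ≤ ε) (hsΦ : s * ‖euclideanCLM Φ‖ ^ 2 ≤ 1) {ω₀ : μ → ℝ}
    (h₀ : f θ₀ = Φ *ᵥ ω₀) (hb : ‖toLp 2 (f θ₀ - y)‖ ≤ b) {t : ℕ} (ht : 2 * s * ε * t ≤ 1)
    (hball : ∀ i ≤ t, vnorm (iterSeq (fun θ => θ - s • (J θ)ᵀ *ᵥ (f θ - y)) θ₀ i - θ₀) ≤ R) :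
    vnorm (f (iterSeq (fun θ => θ - s • (J θ)ᵀ *ᵥ (f θ - y)) θ₀ t)
      - Φ *ᵥ iterSeq (fun w => w - s • Φᵀ *ᵥ (Φ *ᵥ w - y)) ω₀ t) ≤ 2 * s * ε * b * t := by
  set θ := iterSeq (fun θ => θ - s • (J θ)ᵀ *ᵥ (f θ - y)) θ₀
  set ω := iterSeq (fun w => w - s • Φᵀ *ᵥ (Φ *ᵥ w - y)) ω₀
  have hdev := norm_sub_le_of_norm_sub_residualStep_le (A := euclideanCLM Φ)
    (r := fun i => toLp 2 (f (θ i) - y)) (ρ := fun i => toLp 2 (Φ *ᵥ ω i - y)) hs hε hsΦ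
    (fun i => toLp_residual_linearStep Φ y s (ω i)) (by simp [θ, ω, iterSeq, h₀]) hb ht
    fun i hi => norm_toLp_sub_residualStep_le_of_mem_ball hf hJ hs y (hball i hi.le)
      (hball (i + 1) hi)
  rwa [vnorm_eq_norm_toLp, ← sub_sub_sub_cancel_right _ _ y, toLp_sub]

end GradientDescentIterates

/-- early-time closeness of the GD dynamics of a nonlinear least-squares
problem and of an associated linear least-squares problem. -/
theorem statement0 :
    ∃ c C : ℝ, 0 < c ∧ 0 < C ∧
      ∀ (N n M : ℕ), 0 < n →
      ∀ (f : (Fin N → ℝ) → (Fin n → ℝ)) (J : (Fin N → ℝ) → Matrix (Fin n) (Fin N) ℝ),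
        (∀ θ₀ : Fin N → ℝ,
          HasFDerivAt f (LinearMap.toContinuousLinearMap (Matrix.mulVecLin (J θ₀))) θ₀) →
        Continuous J →
      ∀ y : Fin n → ℝ, vnorm y ≤ Real.sqrt n →
      ∀ (Φ : Matrix (Fin n) (Fin M) ℝ) (η ε R : ℝ) (θ0 : Fin N → ℝ) (ω0 : Fin M → ℝ),
        0 < η → η ≤ (n : ℝ) / spNorm (Φ * Φ.transpose) →
        0 < ε → ε < spNorm (Φ * Φ.transpose) → 0 < R → R ^ 2 * ε < n →
        (∀ θ₁ θ₂ : Fin N → ℝ, vnorm (θ₁ - θ0) ≤ R → vnorm (θ₂ - θ0) ≤ R →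
          spNorm (J θ₁ * (J θ₂).transpose - Φ * Φ.transpose) ≤ ε) →
        f θ0 = 0 → Φ.mulVec ω0 = 0 →
        ∀ t : ℕ, (t : ℝ) ≤ c * R ^ 2 / η →
          vnorm
              (f (iterSeq (fun θ => θ - (η / n) • (J θ).transpose.mulVec (f θ - y)) θ0 t)
                - Φ.mulVec
                    (iterSeq (fun w => w - (η / n) • Φ.transpose.mulVec (Φ.mulVec w - y)) ω0 t))
            ≤ C * η * t * ε / Real.sqrt n ∧
          vnorm (iterSeq (fun θ => θ - (η / n) • (J θ).transpose.mulVec (f θ - y)) θ0 t - θ0)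
            ≤ R ∧
          vnorm (iterSeq (fun w => w - (η / n) • Φ.transpose.mulVec (Φ.mulVec w - y)) ω0 t - ω0)
            ≤ R := by
  refine ⟨1 / 5, 2, by norm_num, by norm_num, ?_⟩
  intro N n M hn f J hf _ y hy Φ η ε R θ₀ ω₀ hη hηK hε hεK hR hRε hJ hf0 hω0 t ht
  have hn' : (0 : ℝ) < n := by exact_mod_cast hn
  rw [spNorm_eq_norm, norm_mul_transpose_self] at hηK hεK
  have hsΦ : η / n * ‖euclideanCLM Φ‖ ^ 2 ≤ 1 := by
    rw [div_mul_eq_mul_div, div_le_one hn']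
    exact (le_div_iff₀ (hε.trans hεK)).mp hηK
  have hηt : η * t ≤ R ^ 2 / 5 := by
    rw [le_div_iff₀ hη] at ht
    linarith
  have hT₁ : η / n * ε * t ≤ 1 / 4 := by
    rw [div_mul_eq_mul_div, div_mul_eq_mul_div, div_le_iff₀ hn']
    nlinarith
  have hT₂ : 5 * (η / n * t * √n ^ 2) ≤ R ^ 2 := by
    rw [Real.sq_sqrt hn'.le, mul_right_comm, div_mul_cancel₀ _ hn'.ne']
    linarith
  have hb : ‖toLp 2 (-y)‖ ≤ √n := by simpa [vnorm_eq_norm_toLp] using hy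
  have hθ := vnorm_iterSeq_sub_le hf hJ (by positivity) hε.le hsΦ (by rwa [hf0, zero_sub])
    hR.le hT₁ hT₂
  have hω := vnorm_iterSeq_sub_le (f := (Φ *ᵥ ·)) (J := fun _ => Φ) (ε := 0)
    (fun _ => (Matrix.mulVecLin Φ).toContinuousLinearMap.hasFDerivAt)
    (by simp [spNorm_eq_norm]) (by positivity) le_rfl hsΦ (by rwa [hω0, zero_sub]) hR.le
    (by simp) hT₂
  refine ⟨?_, hθ t le_rfl, hω t le_rfl⟩
  calc _ ≤ 2 * (η / n) * ε * √n * t :=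
        vnorm_iterSeq_sub_mulVec_iterSeq_le hf hJ (by positivity) hε.le hsΦ
          (hf0.trans hω0.symm) (by rwa [hf0, zero_sub]) (by linarith) hθ
    _ = 2 * η * t * ε * (√n / n) := by ring
    _ = 2 * η * t * ε / √n := by rw [Real.sqrt_div_self', mul_one_div]

end EarlyPhase

end
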